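/- arXiv:2112.06282 — 7 statements merged into one kernel-verified Lean document; each statement's English description precedes it below -/
import Mathlib

section
/- Let (E, 𝓘) be a matroid and w : E → ℝ_{≥0} a weight function. If π is a permutation of E such that w(π(1)) ≥ w(π(2)) ≥ ⋯ ≥ w(π(n)), then the set produced by the greedy algorithm — start with S = ∅ and, for i = 1, …, n in order, add π(i) to S if S ∪ {π(i)} ∈ 𝓘 — is a maximum-weight independent set: Σ_{i∈S} w(i) ≥ Σ_{i∈T} w(i) for all T ∈ 𝓘. -/
/-- A finite matroid given by its independent sets. -/
structure GreedyMatroid (α : Type*) [DecidableEq α] where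
  Indep : Finset α → Prop
  empty_indep : Indep ∅
  subset_indep : ∀ ⦃S T : Finset α⦄, S ⊆ T → Indep T → Indep S
  exchange : ∀ ⦃S T : Finset α⦄, Indep S → Indep T → S.card < T.card →
    ∃ i ∈ T, i ∉ S ∧ Indep (insert i S)

/-- The output of the matroid greedy algorithm processing elements in the order
`π 0, π 1, …, π (n-1)`. -/
def greedySet {n : ℕ} (M : GreedyMatroid (Fin n)) [DecidablePred M.Indep]
    (π : Equiv.Perm (Fin n)) : Finset (Fin n) :=
  (List.finRange n).foldl
    (fun S i => if M.Indep (insert (π i) S) then insert (π i) S else S) ∅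

namespace Stmt3Aux

variable {n : ℕ} (M : GreedyMatroid (Fin n)) [DecidablePred M.Indep]
  (π : Equiv.Perm (Fin n))

/-- The greedy set after `k` steps. -/
def g : ℕ → Finset (Fin n)
  | 0 => ∅
  | (k+1) =>
    if h : k < n then
      (if M.Indep (insert (π ⟨k, h⟩) (g k)) then insert (π ⟨k, h⟩) (g k) else g k)
    else g k

lemma g_take (k : ℕ) (hk : k ≤ n) :
    ((List.finRange n).take k).foldl
      (fun S i => if M.Indep (insert (π i) S) then insert (π i) S else S) ∅ = g M π k := by
  induction k with
  | zero => simp [g]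
  | succ k ih =>
    have hk' : k < n := hk
    have htake : (List.finRange n).take (k+1) =
        (List.finRange n).take k ++ [⟨k, hk'⟩] := by
      have hget : (List.finRange n)[k]? = some ⟨k, hk'⟩ := by
        rw [List.getElem?_eq_getElem (by simp [hk'] : k < (List.finRange n).length)]
        simp
      rw [List.take_succ, hget]
      rfl
    rw [htake, List.foldl_append, ih (le_of_lt hk')]
    simp [g, hk']

lemma greedySet_eq : greedySet M π = g M π n := by
  have := g_take M π n le_rfl
  rwa [List.take_of_length_le (by simp)] at this

lemma g_succ_def (k : ℕ) : g M π (k+1) =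
    if h : k < n then
      (if M.Indep (insert (π ⟨k, h⟩) (g M π k)) then insert (π ⟨k, h⟩) (g M π k) else g M π k)
    else g M π k := rfl

lemma g_indep : ∀ k, M.Indep (g M π k)
  | 0 => M.empty_indep
  | (k+1) => by
    rw [g_succ_def]
    split_ifs with h1 h2
    · exact h2
    · exact g_indep k
    · exact g_indep k

lemma g_subset_succ (k : ℕ) : g M π k ⊆ g M π (k+1) := by
  rw [g_succ_def]
  split_ifs with h1 h2
  · exact Finset.subset_insert _ _
  · exact subset_rfl
  · exact subset_rfl

lemma g_mono {k m : ℕ} (h : k ≤ m) : g M π k ⊆ g M π m := by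
  induction m with
  | zero => simpa [Nat.le_zero.mp h]
  | succ m ih =>
    rcases Nat.lt_or_ge k (m+1) with h' | h'
    · exact (ih (Nat.lt_succ_iff.mp h')).trans (g_subset_succ M π m)
    · have : k = m + 1 := le_antisymm h h'
      simp [this]

lemma mem_g {x : Fin n} {k : ℕ} (hx : x ∈ g M π k) : ((π.symm x : Fin n) : ℕ) < k := by
  induction k with
  | zero => simp [g] at hx
  | succ k ih =>
    rw [g_succ_def] at hx
    split_ifs at hx with h1 h2
    · rcases Finset.mem_insert.mp hx with rfl | hx
      · simp [Nat.lt_succ_iff]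
      · exact Nat.lt_succ_of_lt (ih hx)
    · exact Nat.lt_succ_of_lt (ih hx)
    · exact Nat.lt_succ_of_lt (ih hx)

lemma g_add {k : ℕ} (h : k < n) (hind : M.Indep (insert (π ⟨k, h⟩) (g M π k))) :
    π ⟨k, h⟩ ∈ g M π (k+1) := by
  rw [g_succ_def]
  simp [h, hind]

/-- The prefix set `{π 0, …, π (k-1)}`. -/
def P (k : ℕ) : Finset (Fin n) :=
  Finset.univ.filter (fun x => ((π.symm x : Fin n) : ℕ) < k)

lemma mem_P {x : Fin n} {k : ℕ} : x ∈ P π k ↔ ((π.symm x : Fin n) : ℕ) < k := by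
  simp [P]

lemma P_mono {k m : ℕ} (h : k ≤ m) : P π k ⊆ P π m := fun x hx =>
  mem_P π |>.mpr (lt_of_lt_of_le (mem_P π |>.mp hx) h)

lemma P_zero : P π 0 = ∅ := by
  ext x; simp [mem_P]

lemma P_succ {k : ℕ} (h : k < n) :
    P π (k+1) = insert (π ⟨k, h⟩) (P π k) := by
  ext x
  rw [Finset.mem_insert, mem_P, mem_P, Nat.lt_succ_iff_lt_or_eq]
  constructor
  · rintro (h1 | h1)
    · exact Or.inr h1
    · left
      have : π.symm x = ⟨k, h⟩ := Fin.ext h1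
      rw [← this, Equiv.apply_symm_apply]
  · rintro (rfl | h1)
    · right; simp
    · exact Or.inl h1

lemma pi_notMem_P {k : ℕ} (h : k < n) : π ⟨k, h⟩ ∉ P π k := by
  simp [mem_P]

lemma g_subset_P (k : ℕ) : g M π k ⊆ P π k := fun x hx => (mem_P π).mpr (mem_g M π hx)

/-- The key greedy invariant: `g n ∩ P k` has at least as many elements as `T ∩ P k`
for any independent `T`. -/
lemma card_ge {T : Finset (Fin n)} (hT : M.Indep T) (k : ℕ) :
    (T ∩ P π k).card ≤ (g M π n ∩ P π k).card := by
  by_contra hlt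
  push_neg at hlt
  have hS : M.Indep (g M π n ∩ P π k) :=
    M.subset_indep (Finset.inter_subset_left) (g_indep M π n)
  have hT' : M.Indep (T ∩ P π k) :=
    M.subset_indep (Finset.inter_subset_left) hT
  obtain ⟨i, hiT, hiS, hind⟩ := M.exchange hS hT' hlt
  have hiP : i ∈ P π k := (Finset.mem_inter.mp hiT).2
  have hiPk : ((π.symm i : Fin n) : ℕ) < k := (mem_P π).mp hiP
  set j : Fin n := π.symm i with hj
  have hign : i ∉ g M π n := fun h => hiS (Finset.mem_inter.mpr ⟨h, hiP⟩)
  have hjn : (j : ℕ) < n := j.isLt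
  have hpij : π ⟨(j : ℕ), hjn⟩ = i := by
    have : (⟨(j : ℕ), hjn⟩ : Fin n) = j := Fin.eta _ _
    rw [this, hj, Equiv.apply_symm_apply]
  have hnind : ¬ M.Indep (insert (π ⟨(j : ℕ), hjn⟩) (g M π (j : ℕ))) := by
    intro hcon
    have : π ⟨(j : ℕ), hjn⟩ ∈ g M π ((j : ℕ) + 1) := g_add M π hjn hcon
    exact hign (g_mono M π hjn (by rwa [hpij] at this))
  apply hnind
  apply M.subset_indep _ hind
  rw [hpij]
  apply Finset.insert_subset_insert
  intro x hx
  exact Finset.mem_inter.mpr ⟨g_mono M π (le_of_lt hjn) hx,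
    P_mono π (le_of_lt hiPk) (g_subset_P M π (j : ℕ) hx)⟩

/-- Abel-summation comparison lemma. -/
lemma abel (a F G : ℕ → ℝ) (hmono : ∀ k l, k ≤ l → a l ≤ a k)
    (h0 : F 0 = G 0) (hFG : ∀ k, G k ≤ F k) : ∀ N,
    ∑ k ∈ Finset.range N, (G (k+1) - G k) * a k + (F N - G N) * a N ≤
      ∑ k ∈ Finset.range N, (F (k+1) - F k) * a k := by
  intro N
  induction N with
  | zero => simp [h0]
  | succ N ih =>
    rw [Finset.sum_range_succ, Finset.sum_range_succ]
    have h1 : (F (N+1) - G (N+1)) * a (N+1) ≤ (F (N+1) - G (N+1)) * a N :=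
      mul_le_mul_of_nonneg_left (hmono N (N+1) (Nat.le_succ N))
        (by linarith [hFG (N+1)])
    nlinarith [ih]

end Stmt3Aux

open Stmt3Aux in
/-- The classical matroid greedy optimality theorem: processing elements in order of
non-increasing nonnegative weight, the greedy algorithm outputs a maximum-weight
independent set. -/
theorem stmt_3 {n : ℕ} (M : GreedyMatroid (Fin n)) [DecidablePred M.Indep]
    (w : Fin n → ℝ) (hw : ∀ i, 0 ≤ w i) (π : Equiv.Perm (Fin n))
    (hsort : ∀ i j : Fin n, i ≤ j → w (π j) ≤ w (π i)) :
    M.Indep (greedySet M π) ∧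
      ∀ T : Finset (Fin n), M.Indep T → ∑ i ∈ T, w i ≤ ∑ i ∈ greedySet M π, w i := by
  rw [greedySet_eq M π]
  set S := g M π n with hS
  refine ⟨g_indep M π n, fun T hT => ?_⟩
  -- set up the Abel summation data
  set a : ℕ → ℝ := fun k => if h : k < n then w (π ⟨k, h⟩) else 0 with ha
  set F : ℕ → ℝ := fun k => ((S ∩ P π k).card : ℝ) with hF
  set G : ℕ → ℝ := fun k => ((T ∩ P π k).card : ℝ) with hG
  have hamono : ∀ k l, k ≤ l → a l ≤ a k := by
    intro k l hkl
    by_cases hl : l < n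
    · have hk : k < n := lt_of_le_of_lt hkl hl
      simp only [ha, dif_pos hl, dif_pos hk]
      exact hsort ⟨k, hk⟩ ⟨l, hl⟩ hkl
    · simp only [ha, dif_neg hl]
      by_cases hk : k < n
      · simp only [dif_pos hk]; exact hw _
      · simp [dif_neg hk]
  have h0 : F 0 = G 0 := by simp [hF, hG, P_zero]
  have hFG : ∀ k, G k ≤ F k := fun k => by
    simp only [hF, hG]
    exact_mod_cast card_ge M π hT k
  -- incremental sums equal weighted sums
  have hinc : ∀ (A : Finset (Fin n)),
      ∑ k ∈ Finset.range n, (((A ∩ P π (k+1)).card : ℝ) - ((A ∩ P π k).card : ℝ)) * a k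
        = ∑ i ∈ A, w i := by
    intro A
    have hterm : ∀ k ∈ Finset.range n,
        (((A ∩ P π (k+1)).card : ℝ) - ((A ∩ P π k).card : ℝ)) * a k
          = (fun k => if h : k < n then (if π ⟨k, h⟩ ∈ A then w (π ⟨k, h⟩) else 0) else 0) k := by
      intro k hk
      have hkn : k < n := Finset.mem_range.mp hk
      have hP : A ∩ P π (k+1) =
          if π ⟨k, hkn⟩ ∈ A then insert (π ⟨k, hkn⟩) (A ∩ P π k) else A ∩ P π k := by
        rw [P_succ π hkn]
        split_ifs with hmem
        · rw [Finset.inter_insert_of_mem hmem]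
        · rw [Finset.inter_insert_of_notMem hmem]
      simp only [ha, dif_pos hkn]
      split_ifs at hP ⊢ with hmem
      · rw [hP, Finset.card_insert_of_notMem
          (fun hc => pi_notMem_P π hkn (Finset.mem_inter.mp hc).2)]
        push_cast
        ring
      · rw [hP]; ring
    rw [Finset.sum_congr rfl hterm,
      ← Fin.sum_univ_eq_sum_range (fun k => if h : k < n then (if π ⟨k, h⟩ ∈ A then w (π ⟨k, h⟩) else 0) else 0) n]
    have : ∀ i : Fin n, (if h : (i : ℕ) < n then (if π ⟨(i : ℕ), h⟩ ∈ A then w (π ⟨(i : ℕ), h⟩) else 0) else 0)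
        = (fun j => if j ∈ A then w j else 0) (π i) := by
      intro i
      simp [i.isLt, Fin.eta]
    rw [Finset.sum_congr rfl (fun i _ => this i), Equiv.sum_comp π (fun j => if j ∈ A then w j else 0)]
    rw [Finset.sum_ite_mem Finset.univ A w, Finset.univ_inter]
  have habel := abel a F G hamono h0 hFG n
  have hSsum : ∑ k ∈ Finset.range n, (F (k+1) - F k) * a k = ∑ i ∈ S, w i := hinc S
  have hTsum : ∑ k ∈ Finset.range n, (G (k+1) - G k) * a k = ∑ i ∈ T, w i := hinc T
  have han : 0 ≤ a n := by simp [ha]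
  have hFGn := hFG n
  nlinarith [habel, hSsum, hTsum]
end

section
/- Consider the LP for optimal persuasive signaling: maximize Σ_θ μ(θ) Σ_{S∈𝓘} φ_θ(S) s_θ(S) subject to Σ_θ μ(θ) φ_θ(S)(r_θ(S) − r_θ(S')) ≥ 0 for all S, S' ∈ 𝓘 and φ_θ ∈ Δ_𝓘 for all θ. Let 𝓘* ⊆ 𝓘 be the set of S ∈ 𝓘 such that S ∈ argmax_{T∈𝓘} Σ_θ ξ(θ) r_θ(T) for some probability distribution ξ on Θ. Then any feasible solution (φ_θ)_{θ∈Θ} of this LP with μ(θ) > 0 for all θ satisfies φ_θ(S) = 0 for every S ∈ 𝓘 \ 𝓘* and every θ ∈ Θ. -/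
/-- Proposition (reduced-variables): any feasible persuasive signaling scheme puts zero
probability on every action that is not a best response to some posterior. -/
theorem stmt_4 {Θ I : Type*} [Fintype Θ] [Fintype I]
    (μ : Θ → ℝ) (hμpos : ∀ θ, 0 < μ θ) (hμsum : ∑ θ, μ θ = 1)
    (s r : Θ → I → ℝ) (hs : ∀ θ S, 0 ≤ s θ S) (hr : ∀ θ S, 0 ≤ r θ S)
    (φ : Θ → I → ℝ)
    (hφnonneg : ∀ θ S, 0 ≤ φ θ S) (hφsum : ∀ θ, ∑ S, φ θ S = 1)
    (hpers : ∀ S S' : I, 0 ≤ ∑ θ, μ θ * φ θ S * (r θ S - r θ S'))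
    (S : I)
    (hS : ¬ ∃ ξ : Θ → ℝ, (∀ θ, 0 ≤ ξ θ) ∧ ∑ θ, ξ θ = 1 ∧
      ∀ T : I, ∑ θ, ξ θ * r θ T ≤ ∑ θ, ξ θ * r θ S) :
    ∀ θ, φ θ S = 0 := by
  by_contra h
  push_neg at h
  obtain ⟨θ₀, hθ₀⟩ := h
  have hpos : 0 < φ θ₀ S := lt_of_le_of_ne (hφnonneg θ₀ S) (Ne.symm hθ₀)
  set c : ℝ := ∑ θ, μ θ * φ θ S with hc
  have hcpos : 0 < c := by
    apply Finset.sum_pos'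
    · intro θ _; exact mul_nonneg (hμpos θ).le (hφnonneg θ S)
    · exact ⟨θ₀, Finset.mem_univ _, mul_pos (hμpos θ₀) hpos⟩
  apply hS
  refine ⟨fun θ => μ θ * φ θ S / c, fun θ => div_nonneg
    (mul_nonneg (hμpos θ).le (hφnonneg θ S)) hcpos.le, ?_, ?_⟩
  · rw [← Finset.sum_div, div_self hcpos.ne']
  · intro T
    have := hpers S T
    rw [← sub_nonneg, ← Finset.sum_sub_distrib]
    have key : ∀ θ, μ θ * φ θ S / c * r θ S - μ θ * φ θ S / c * r θ T
        = (μ θ * φ θ S * (r θ S - r θ T)) / c := by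
      intro θ; ring
    simp_rw [key, ← Finset.sum_div]
    exact div_nonneg this hcpos.le
end

section
/- With the same setup, consider the reduced LP whose persuasiveness constraints Σ_θ μ(θ) φ_θ(S)(r_θ(S) − r_θ(S')) ≥ 0 are imposed only for S, S' ∈ 𝓘*. Then any feasible solution (φ_θ)_{θ∈Θ} of the reduced LP (with μ(θ) > 0 for all θ) in fact satisfies Σ_θ μ(θ) φ_θ(S)(r_θ(S) − r_θ(S')) ≥ 0 for all S ∈ 𝓘* and all S' ∈ 𝓘. -/
/-- Proposition (reduced-constraints): a feasible solution of the reduced LP (with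
persuasiveness constraints only for pairs in `𝓘*`) satisfies the persuasiveness
constraints against every action in `𝓘`. -/
theorem stmt_5 {Θ I : Type*} [Fintype Θ] [Fintype I] [Nonempty I]
    (μ : Θ → ℝ) (hμpos : ∀ θ, 0 < μ θ) (hμsum : ∑ θ, μ θ = 1)
    (r : Θ → I → ℝ) (hr : ∀ θ S, 0 ≤ r θ S)
    (Istar : Set I)
    (hIstar : ∀ S : I, S ∈ Istar ↔ ∃ ξ : Θ → ℝ, (∀ θ, 0 ≤ ξ θ) ∧ ∑ θ, ξ θ = 1 ∧
      ∀ T : I, ∑ θ, ξ θ * r θ T ≤ ∑ θ, ξ θ * r θ S)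
    (φ : Θ → I → ℝ)
    (hφnonneg : ∀ θ S, 0 ≤ φ θ S) (hφsum : ∀ θ, ∑ S, φ θ S = 1)
    (hpers : ∀ S ∈ Istar, ∀ S' ∈ Istar, 0 ≤ ∑ θ, μ θ * φ θ S * (r θ S - r θ S')) :
    ∀ S ∈ Istar, ∀ S' : I, 0 ≤ ∑ θ, μ θ * φ θ S * (r θ S - r θ S') := by
  intro S hS S'
  set w : Θ → ℝ := fun θ => μ θ * φ θ S with hw
  have hwnn : ∀ θ, 0 ≤ w θ := fun θ => mul_nonneg (hμpos θ).le (hφnonneg θ S)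
  by_cases hz : ∑ θ, w θ = 0
  · have hzero : ∀ θ ∈ Finset.univ, w θ = 0 :=
      fun θ _ => (Finset.sum_eq_zero_iff_of_nonneg (fun θ _ => hwnn θ)).mp hz θ (Finset.mem_univ θ)
    have : ∑ θ, w θ * (r θ S - r θ S') = 0 := by
      apply Finset.sum_eq_zero
      intro θ hθ
      rw [hzero θ hθ, zero_mul]
    rw [this]
  · have hWpos : 0 < ∑ θ, w θ :=
      lt_of_le_of_ne (Finset.sum_nonneg fun θ _ => hwnn θ) (Ne.symm hz)
    set W := ∑ θ, w θ
    -- pick T maximizing θ ↦ ∑ θ, w θ * r θ ·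
    obtain ⟨T, -, hT⟩ := Finset.exists_max_image (Finset.univ : Finset I)
      (fun T => ∑ θ, w θ * r θ T) Finset.univ_nonempty
    have hTstar : T ∈ Istar := by
      rw [hIstar]
      refine ⟨fun θ => w θ / W, fun θ => div_nonneg (hwnn θ) hWpos.le, ?_, ?_⟩
      · rw [← Finset.sum_div, div_self hWpos.ne']
      · intro T'
        have := hT T' (Finset.mem_univ T')
        calc ∑ θ, w θ / W * r θ T' = (∑ θ, w θ * r θ T') / W := by
              rw [Finset.sum_div]; exact Finset.sum_congr rfl fun θ _ => by ring
          _ ≤ (∑ θ, w θ * r θ T) / W := by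
              exact div_le_div_of_nonneg_right this hWpos.le
          _ = ∑ θ, w θ / W * r θ T := by
              rw [Finset.sum_div]; exact Finset.sum_congr rfl fun θ _ => by ring
    have h1 : 0 ≤ ∑ θ, w θ * (r θ S - r θ T) := hpers S hS T hTstar
    have h2 : ∑ θ, w θ * r θ S' ≤ ∑ θ, w θ * r θ T := hT S' (Finset.mem_univ S')
    have h3 : ∑ θ, w θ * r θ T ≤ ∑ θ, w θ * r θ S := by
      have : ∑ θ, w θ * (r θ S - r θ T) = ∑ θ, w θ * r θ S - ∑ θ, w θ * r θ T := by
        rw [← Finset.sum_sub_distrib]; exact Finset.sum_congr rfl fun θ _ => by ring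
      linarith [this ▸ h1]
    have : ∑ θ, w θ * (r θ S - r θ S') = ∑ θ, w θ * r θ S - ∑ θ, w θ * r θ S' := by
      rw [← Finset.sum_sub_distrib]; exact Finset.sum_congr rfl fun θ _ => by ring
    linarith [this]
end

section
/- Combining the previous two facts: there is a bijection between the feasible regions of the full LP (constraints over all S, S' ∈ 𝓘 with variables φ_θ(S) for all S ∈ 𝓘) and the reduced LP (constraints and variables restricted to 𝓘*), given by restricting/extending by zeros, and this bijection preserves the objective value Σ_θ μ(θ) Σ_S φ_θ(S) s_θ(S). -/
/-- Helper: the normalized posterior induced by `φ` at signal `S`. -/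
private lemma aux_posterior {Θ I : Type*} [Fintype Θ] [Fintype I]
    (μ : Θ → ℝ) (φ : Θ → I → ℝ) (r : Θ → I → ℝ) (S : I)
    (hnn : ∀ θ, 0 ≤ μ θ * φ θ S)
    (hc : 0 < ∑ θ, μ θ * φ θ S) :
    ∃ ξ : Θ → ℝ, (∀ θ, 0 ≤ ξ θ) ∧ ∑ θ, ξ θ = 1 ∧
      ∀ T : I, ∑ θ, ξ θ * r θ T = (∑ θ, μ θ * φ θ S * r θ T) / (∑ θ, μ θ * φ θ S) := by
  refine ⟨fun θ => μ θ * φ θ S / (∑ θ, μ θ * φ θ S),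
    fun θ => div_nonneg (hnn θ) hc.le, ?_, fun T => ?_⟩
  · rw [← Finset.sum_div, div_self hc.ne']
  · trans ∑ θ, (μ θ * φ θ S * r θ T) / (∑ θ', μ θ' * φ θ' S)
    · exact Finset.sum_congr rfl fun θ _ => by ring
    · rw [← Finset.sum_div]

private lemma aux_split {Θ : Type*} [Fintype Θ]
    (μ : Θ → ℝ) (φ : Θ → ℝ) (a b : Θ → ℝ) :
    ∑ θ, μ θ * φ θ * (a θ - b θ) = (∑ θ, μ θ * φ θ * a θ) - ∑ θ, μ θ * φ θ * b θ := by
  rw [← Finset.sum_sub_distrib]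
  exact Finset.sum_congr rfl fun θ _ => by ring

/-- Proposition 1: there is an objective-preserving bijection between the feasible
region of the full persuasion LP and that of the reduced LP (variables and
constraints restricted to the set `𝓘*` of possible best responses). -/
theorem stmt_6 {Θ I : Type*} [Fintype Θ] [Fintype I] [Nonempty I]
    (μ : Θ → ℝ) (hμpos : ∀ θ, 0 < μ θ) (hμsum : ∑ θ, μ θ = 1)
    (s r : Θ → I → ℝ) (hs : ∀ θ S, 0 ≤ s θ S) (hr : ∀ θ S, 0 ≤ r θ S)
    (Istar : Set I)
    (hIstar : ∀ S : I, S ∈ Istar ↔ ∃ ξ : Θ → ℝ, (∀ θ, 0 ≤ ξ θ) ∧ ∑ θ, ξ θ = 1 ∧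
      ∀ T : I, ∑ θ, ξ θ * r θ T ≤ ∑ θ, ξ θ * r θ S) :
    ∃ e : {φ : Θ → I → ℝ //
        (∀ θ S, 0 ≤ φ θ S) ∧ (∀ θ, ∑ S, φ θ S = 1) ∧
        (∀ S S' : I, 0 ≤ ∑ θ, μ θ * φ θ S * (r θ S - r θ S'))} ≃
      {φ : Θ → I → ℝ //
        (∀ θ S, 0 ≤ φ θ S) ∧ (∀ θ, ∑ S, φ θ S = 1) ∧
        (∀ θ, ∀ S ∉ Istar, φ θ S = 0) ∧
        (∀ S ∈ Istar, ∀ S' ∈ Istar, 0 ≤ ∑ θ, μ θ * φ θ S * (r θ S - r θ S'))},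
      ∀ φ, ∑ θ, μ θ * ∑ S, (e φ).1 θ S * s θ S = ∑ θ, μ θ * ∑ S, φ.1 θ S * s θ S := by
  -- Forward: full feasibility implies support in Istar.
  have fwd : ∀ φ : Θ → I → ℝ, (∀ θ S, 0 ≤ φ θ S) →
      (∀ S S' : I, 0 ≤ ∑ θ, μ θ * φ θ S * (r θ S - r θ S')) →
      (∀ θ, ∀ S ∉ Istar, φ θ S = 0) := by
    intro φ hpos hcons θ S hS
    by_contra h
    have hφpos : 0 < φ θ S := lt_of_le_of_ne (hpos θ S) (Ne.symm h)
    have hnn : ∀ θ', 0 ≤ μ θ' * φ θ' S := fun θ' =>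
      mul_nonneg (hμpos θ').le (hpos θ' S)
    have hc : 0 < ∑ θ', μ θ' * φ θ' S :=
      Finset.sum_pos' (fun θ' _ => hnn θ')
        ⟨θ, Finset.mem_univ θ, mul_pos (hμpos θ) hφpos⟩
    obtain ⟨ξ, hξnn, hξsum, hξval⟩ := aux_posterior μ φ r S hnn hc
    refine hS ((hIstar S).mpr ⟨ξ, hξnn, hξsum, fun T => ?_⟩)
    rw [hξval T, hξval S]
    refine (div_le_div_iff_of_pos_right hc).mpr ?_
    have := hcons S T
    rw [aux_split μ (fun θ' => φ θ' S) (fun θ' => r θ' S) (fun θ' => r θ' T)] at this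
    linarith
  -- Backward: reduced feasibility implies all full constraints.
  have bwd : ∀ φ : Θ → I → ℝ, (∀ θ S, 0 ≤ φ θ S) →
      (∀ θ, ∀ S ∉ Istar, φ θ S = 0) →
      (∀ S ∈ Istar, ∀ S' ∈ Istar, 0 ≤ ∑ θ, μ θ * φ θ S * (r θ S - r θ S')) →
      (∀ S S' : I, 0 ≤ ∑ θ, μ θ * φ θ S * (r θ S - r θ S')) := by
    intro φ hpos hsupp hcons S S'
    by_cases hz : ∀ θ, φ θ S = 0
    · apply le_of_eq
      symm
      exact Finset.sum_eq_zero fun θ _ => by rw [hz θ]; ring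
    · push_neg at hz
      obtain ⟨θ0, hθ0⟩ := hz
      have hφpos : 0 < φ θ0 S := lt_of_le_of_ne (hpos θ0 S) (Ne.symm hθ0)
      have hSstar : S ∈ Istar := by
        by_contra hS
        exact hθ0 (hsupp θ0 S hS)
      have hnn : ∀ θ', 0 ≤ μ θ' * φ θ' S := fun θ' =>
        mul_nonneg (hμpos θ').le (hpos θ' S)
      have hc : 0 < ∑ θ', μ θ' * φ θ' S :=
        Finset.sum_pos' (fun θ' _ => hnn θ')
          ⟨θ0, Finset.mem_univ θ0, mul_pos (hμpos θ0) hφpos⟩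
      obtain ⟨ξ, hξnn, hξsum, hξval⟩ := aux_posterior μ φ r S hnn hc
      -- Take a best response T to ξ over all of I; T ∈ Istar.
      obtain ⟨T, -, hT⟩ := Finset.exists_max_image Finset.univ
        (fun T => ∑ θ, ξ θ * r θ T) Finset.univ_nonempty
      have hTstar : T ∈ Istar :=
        (hIstar T).mpr ⟨ξ, hξnn, hξsum, fun T' => hT T' (Finset.mem_univ T')⟩
      -- From the reduced constraint (S, T):
      have h1 : ∑ θ, μ θ * φ θ S * r θ T ≤ ∑ θ, μ θ * φ θ S * r θ S := by
        have := hcons S hSstar T hTstar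
        rw [aux_split μ (fun θ' => φ θ' S) (fun θ' => r θ' S) (fun θ' => r θ' T)] at this
        linarith
      -- From optimality of T: r-payoff of S' ≤ r-payoff of T under ξ, rescale by c.
      have h2 : ∑ θ, μ θ * φ θ S * r θ S' ≤ ∑ θ, μ θ * φ θ S * r θ T := by
        have := hT S' (Finset.mem_univ S')
        rw [hξval S', hξval T] at this
        exact (div_le_div_iff_of_pos_right hc).mp this
      rw [aux_split μ (fun θ' => φ θ' S) (fun θ' => r θ' S) (fun θ' => r θ' S')]
      linarith
  refine ⟨{
    toFun := fun φ => ⟨φ.1, φ.2.1, φ.2.2.1, fwd φ.1 φ.2.1 φ.2.2.2,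
      fun S _ S' _ => φ.2.2.2 S S'⟩
    invFun := fun φ => ⟨φ.1, φ.2.1, φ.2.2.1, bwd φ.1 φ.2.1 φ.2.2.2.1 φ.2.2.2.2⟩
    left_inv := fun φ => Subtype.ext rfl
    right_inv := fun φ => Subtype.ext rfl }, fun φ => rfl⟩
end

section
/- In the setting of Bayesian persuasion with a matroid constraint and linear receiver utilities, the set 𝓘* of independent sets that are a maximum-weight independent set for the weights i ↦ Σ_θ ξ(θ) r_θ({i}) for some ξ ∈ Δ_Θ has cardinality at most the number of distinct strict orderings of E induced by some ξ in the affine hull of Δ_Θ, which is at most the number of cells of the arrangement of the O(n²) hyperplanes h_{ij} = { ξ : Σ_θ ξ(θ)(r_θ({i}) − r_θ({j})) = 0 } in the (|Θ|−1)-dimensional affine hull; hence |𝓘*| = O(n^{2(|Θ|−1)}) under the non-degeneracy assumption. -/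
section SignPatterns

open Module Set

variable {V : Type*} [AddCommGroup V] [Module ℝ V]

def signPatterns {ι : Type*} (f : ι → V →ᵃ[ℝ] ℝ) (C : Set V) : Set (ι → SignType) :=
  (fun x j => SignType.sign (f j x)) '' C

theorem convex_setOf_sign_eq (s : SignType) : Convex ℝ {a : ℝ | SignType.sign a = s} := by
  obtain rfl | rfl | rfl : s = 0 ∨ s = -1 ∨ s = 1 := by cases s <;> decide
  · rw [show {a : ℝ | SignType.sign a = 0} = {0} from ext fun _ => sign_eq_zero_iff]
    exact convex_singleton 0
  · rw [show {a : ℝ | SignType.sign a = -1} = Iio 0 from ext fun _ => sign_eq_neg_one_iff]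
    exact convex_Iio 0
  · rw [show {a : ℝ | SignType.sign a = 1} = Ioi 0 from ext fun _ => sign_eq_one_iff]
    exact convex_Ioi 0

theorem signPatterns_pos_inter_neg_subset {ι : Type*} (f : ι → V →ᵃ[ℝ] ℝ) (g : V →ᵃ[ℝ] ℝ)
    {C : Set V} (hC : Convex ℝ C) :
    signPatterns f {x ∈ C | SignType.sign (g x) = 1} ∩
        signPatterns f {x ∈ C | SignType.sign (g x) = -1} ⊆
      signPatterns f {x ∈ C | SignType.sign (g x) = 0} := by
  rintro _ ⟨⟨x, ⟨hxC, hx⟩, rfl⟩, ⟨y, ⟨hyC, hy⟩, hxy⟩⟩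
  rw [sign_eq_one_iff] at hx
  rw [sign_eq_neg_one_iff] at hy
  have hcell : Convex ℝ (C ∩ ⋂ j, f j ⁻¹' {a | SignType.sign a = SignType.sign (f j x)}) :=
    hC.inter (convex_iInter fun j => (convex_setOf_sign_eq _).affine_preimage (f j))
  set t := g x / (g x - g y)
  have ht : t ∈ Icc (0 : ℝ) 1 :=
    ⟨div_nonneg hx.le (by linarith), (div_le_one (by linarith)).2 (by linarith)⟩
  have hz := hcell.segment_subset ⟨hxC, mem_iInter.2 fun _ => rfl⟩
    ⟨hyC, mem_iInter.2 fun j => congrFun hxy j⟩ (lineMap_mem_segment ℝ x y ht)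
  refine ⟨AffineMap.lineMap x y t, ⟨hz.1, ?_⟩, funext fun j => mem_iInter.1 hz.2 j⟩
  have hgz : g (AffineMap.lineMap x y t) = 0 := by
    have hne : g x - g y ≠ 0 := (by linarith : 0 < g x - g y).ne'
    rw [AffineMap.apply_lineMap, AffineMap.lineMap_apply_module, smul_eq_mul, smul_eq_mul]
    simp only [t]
    field_simp
    ring
  rw [hgz, sign_zero]

theorem finrank_vectorSpan_zeroSet_lt [FiniteDimensional ℝ V] (g : V →ᵃ[ℝ] ℝ) {C : Set V}
    {x y : V} (hx : x ∈ C) (hy : y ∈ C) (hxy : g x ≠ g y) :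
    finrank ℝ (vectorSpan ℝ {z ∈ C | SignType.sign (g z) = 0}) < finrank ℝ (vectorSpan ℝ C) := by
  have hle : vectorSpan ℝ {z ∈ C | SignType.sign (g z) = 0} ≤
      vectorSpan ℝ C ⊓ LinearMap.ker g.linear := by
    refine le_inf (vectorSpan_mono ℝ (sep_subset _ _)) ?_
    rw [vectorSpan_def, Submodule.span_le]
    rintro _ ⟨p, ⟨-, hp⟩, q, ⟨-, hq⟩, rfl⟩
    rw [sign_eq_zero_iff] at hp hq
    rw [SetLike.mem_coe, LinearMap.mem_ker, AffineMap.linearMap_vsub, hp, hq, vsub_self]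
  have hlt : vectorSpan ℝ C ⊓ LinearMap.ker g.linear < vectorSpan ℝ C := by
    refine inf_lt_left.2 fun h => hxy ?_
    have := h (vsub_mem_vectorSpan ℝ hx hy)
    rwa [LinearMap.mem_ker, AffineMap.linearMap_vsub, vsub_eq_sub, sub_eq_zero] at this
  exact (Submodule.finrank_mono hle).trans_lt (Submodule.finrank_lt_finrank_of_lt hlt)

theorem ncard_signPatterns_le_sum {m : ℕ} (f : Fin (m + 1) → V →ᵃ[ℝ] ℝ) (C : Set V) :
    (signPatterns f C).ncard ≤ ∑ s : SignType,
      (signPatterns (Fin.init f) {x ∈ C | SignType.sign (f (Fin.last m) x) = s}).ncard := by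
  have hcover : signPatterns f C ⊆ ⋃ s, (fun τ => Fin.snoc τ s) ''
      signPatterns (Fin.init f) {x ∈ C | SignType.sign (f (Fin.last m) x) = s} := by
    rintro _ ⟨x, hx, rfl⟩
    exact mem_iUnion.2 ⟨_, _, ⟨x, ⟨hx, rfl⟩, rfl⟩,
      Fin.snoc_init_self (fun j => SignType.sign (f j x))⟩
  calc _ ≤ _ := ncard_le_ncard hcover
    _ ≤ _ := ncard_iUnion_le_of_fintype _
    _ ≤ _ := Finset.sum_le_sum fun _ _ => ncard_image_le

theorem ncard_signPatterns_le_of_forall_eq {m : ℕ} (f : Fin (m + 1) → V →ᵃ[ℝ] ℝ) {C : Set V}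
    (hconst : ∀ x ∈ C, ∀ y ∈ C, f (Fin.last m) x = f (Fin.last m) y) :
    (signPatterns f C).ncard ≤ (signPatterns (Fin.init f) C).ncard := by
  have hinit : signPatterns (Fin.init f) C = Fin.init '' signPatterns f C :=
    (image_image Fin.init (fun x j => SignType.sign (f j x)) C).symm
  rw [hinit]
  refine (InjOn.ncard_image ?_).ge
  rintro _ ⟨x, hx, rfl⟩ _ ⟨y, hy, rfl⟩ hxy
  funext j
  refine Fin.lastCases ?_ (fun i => congrFun hxy i) j
  exact congrArg SignType.sign (hconst x hx y hy)

theorem ncard_signPatterns_le [FiniteDimensional ℝ V] {m k : ℕ} (f : Fin m → V →ᵃ[ℝ] ℝ)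
    {C : Set V} (hC : Convex ℝ C) (hk : finrank ℝ (vectorSpan ℝ C) ≤ k) :
    (signPatterns f C).ncard ≤ (2 * m + 2) ^ k := by
  induction m generalizing k C with
  | zero => exact (ncard_le_one_of_subsingleton _).trans (Nat.one_le_pow _ _ (by omega))
  | succ m ih =>
    set g := f (Fin.last m)
    by_cases hconst : ∀ x ∈ C, ∀ y ∈ C, g x = g y
    · calc _ ≤ _ := ncard_signPatterns_le_of_forall_eq f hconst
        _ ≤ (2 * m + 2) ^ k := ih _ hC hk
        _ ≤ _ := Nat.pow_le_pow_left (by omega) _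
    push Not at hconst
    obtain ⟨x, hx, y, hy, hxy⟩ := hconst
    have hlt := finrank_vectorSpan_zeroSet_lt g hx hy hxy
    obtain ⟨k, rfl⟩ : ∃ k', k = k' + 1 := Nat.exists_eq_succ_of_ne_zero (by omega)
    let P (s : SignType) := signPatterns (Fin.init f) {z ∈ C | SignType.sign (g z) = s}
    have hzero : (P 0).ncard ≤ (2 * m + 2) ^ k :=
      ih _ (hC.inter ((convex_setOf_sign_eq 0).affine_preimage g)) (by omega)
    have hunion : (P 1 ∪ P (-1)).ncard ≤ (2 * m + 2) ^ (k + 1) :=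
      (ncard_le_ncard (union_subset (image_mono (sep_subset _ _))
        (image_mono (sep_subset _ _)))).trans (ih _ hC hk)
    have hinter : (P 1 ∩ P (-1)).ncard ≤ (P 0).ncard :=
      ncard_le_ncard (signPatterns_pos_inter_neg_subset _ g hC)
    have hsplit : (signPatterns f C).ncard ≤ (P 0).ncard + ((P (-1)).ncard + (P 1).ncard) :=
      (ncard_signPatterns_le_sum f C).trans_eq (by simp [SignType.univ_eq, P, g])
    calc (signPatterns f C).ncard ≤ (2 * m + 2) ^ (k + 1) + 2 * (2 * m + 2) ^ k := by
          have := ncard_union_add_ncard_inter (P 1) (P (-1))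
          omega
      _ = (2 * m + 2) ^ k * (2 * (m + 1) + 2) := by ring
      _ ≤ (2 * (m + 1) + 2) ^ k * (2 * (m + 1) + 2) := by gcongr; omega
      _ = _ := by ring

theorem ncard_signPatterns_le_of_fintype [FiniteDimensional ℝ V] {ι : Type*} [Fintype ι] {k : ℕ}
    (f : ι → V →ᵃ[ℝ] ℝ) {C : Set V} (hC : Convex ℝ C) (hk : finrank ℝ (vectorSpan ℝ C) ≤ k) :
    (signPatterns f C).ncard ≤ (2 * Fintype.card ι + 2) ^ k := by
  let e := Fintype.equivFin ι
  have hreindex : signPatterns f C = (· ∘ e) '' signPatterns (f ∘ e.symm) C := by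
    simp only [signPatterns, image_image]
    congr! with x j
    simp
  rw [hreindex, ncard_image_of_injective _ e.surjective.injective_comp_right]
  exact ncard_signPatterns_le _ hC hk

end SignPatterns

namespace GreedyMatroid

open Finset

variable {α : Type*} [DecidableEq α] (M : GreedyMatroid α)

theorem exists_indep_subset_union_card_eq {I T : Finset α} (hI : M.Indep I) (hT : M.Indep T)
    (hIT : I.card ≤ T.card) : ∃ D, M.Indep D ∧ I ⊆ D ∧ D ⊆ I ∪ T ∧ D.card = T.card := by
  obtain ⟨k, hk⟩ := Nat.exists_eq_add_of_le hIT
  induction k generalizing I with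
  | zero => exact ⟨I, hI, subset_rfl, subset_union_left, hk.symm⟩
  | succ k ih =>
    obtain ⟨i, hiT, hiI, hins⟩ := M.exchange hI hT (by omega)
    have hcard : (insert i I).card = I.card + 1 := card_insert_of_notMem hiI
    obtain ⟨D, hD, hID, hDsub, hDcard⟩ := ih hins (by omega) (by omega)
    refine ⟨D, hD, (subset_insert i I).trans hID, hDsub.trans ?_, hDcard⟩
    rw [insert_union, insert_eq_of_mem (mem_union_right _ hiT)]

theorem exists_insert_erase_indep {I S : Finset α} {x : α} (hS : M.Indep S) (hIS : I ⊆ S)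
    (hxS : x ∉ S) (hxI : M.Indep (insert x I)) :
    M.Indep (insert x S) ∨ ∃ y ∈ S, y ∉ I ∧ M.Indep (insert x (S.erase y)) := by
  have hcardI : (insert x I).card = I.card + 1 := card_insert_of_notMem fun h => hxS (hIS h)
  have hcardS : (insert x S).card = S.card + 1 := card_insert_of_notMem hxS
  by_cases hlt : S.card < (insert x I).card
  · left
    rwa [← eq_of_subset_of_card_le hIS (by omega)]
  right
  obtain ⟨D, hD, hxID, hDsub, hDcard⟩ :=
    M.exists_indep_subset_union_card_eq hxI hS (not_lt.1 hlt)
  have hDxS : D ⊆ insert x S := hDsub.trans (by rw [insert_union, union_eq_right.2 hIS])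
  obtain ⟨y, hyxS, hyD⟩ : ∃ y ∈ insert x S, y ∉ D :=
    not_subset.1 fun h => by have := card_le_card h; omega
  have hyx : y ≠ x := fun h => hyD (h ▸ hxID (mem_insert_self x I))
  have hyS : y ∈ S := (mem_insert.1 hyxS).resolve_left hyx
  refine ⟨y, hyS, fun hyI => hyD (hxID (mem_insert_of_mem hyI)), ?_⟩
  have hDeq : D = insert x (S.erase y) := by
    refine eq_of_subset_of_card_le ?_ ?_
    · rw [← erase_insert_of_ne hyx.symm]
      exact subset_erase.2 ⟨hDxS, hyD⟩
    · rw [card_insert_of_notMem fun h => hxS (mem_of_mem_erase h), card_erase_of_mem hyS]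
      omega
  exact hDeq ▸ hD

def IsMaxWeight (w : α → ℝ) (S : Finset α) : Prop :=
  M.Indep S ∧ ∀ T, M.Indep T → ∑ i ∈ T, w i ≤ ∑ i ∈ S, w i

variable {M}

theorem IsMaxWeight.card_le_card_inter {w : α → ℝ} {S U A : Finset α} (hS : M.IsMaxWeight w S)
    (hU : ∀ b ∈ U, ∀ c, w b ≤ w c → c ∈ U) (hpos : ∀ b ∈ U, 0 < w b)
    (hA : M.Indep A) (hAU : A ⊆ U) : A.card ≤ (S ∩ U).card := by
  by_contra! hlt
  obtain ⟨x, hxA, hxSU, hins⟩ := M.exchange (M.subset_indep inter_subset_left hS.1) hA hlt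
  have hxU := hAU hxA
  have hxS : x ∉ S := fun h => hxSU (mem_inter.2 ⟨h, hxU⟩)
  rcases M.exists_insert_erase_indep hS.1 inter_subset_left hxS hins with hxS' | ⟨y, hyS, hyU, hy⟩
  · have := hS.2 _ hxS'
    rw [sum_insert hxS] at this
    linarith [hpos x hxU]
  · have hyx : w y < w x := lt_of_not_ge fun h => hyU (mem_inter.2 ⟨hyS, hU x hxU y h⟩)
    have := hS.2 _ hy
    rw [sum_insert fun h => hxS (mem_of_mem_erase h), ← add_sum_erase S w hyS] at this
    linarith

theorem IsMaxWeight.card_inter_eq {w w' : α → ℝ} {S S' U : Finset α} (hS : M.IsMaxWeight w S)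
    (hS' : M.IsMaxWeight w' S') (hU : ∀ b ∈ U, ∀ c, w b ≤ w c → c ∈ U)
    (hU' : ∀ b ∈ U, ∀ c, w' b ≤ w' c → c ∈ U) (hpos : ∀ b ∈ U, 0 < w b)
    (hpos' : ∀ b ∈ U, 0 < w' b) : (S ∩ U).card = (S' ∩ U).card :=
  le_antisymm
    (hS'.card_le_card_inter hU' hpos' (M.subset_indep inter_subset_left hS.1) inter_subset_right)
    (hS.card_le_card_inter hU hpos (M.subset_indep inter_subset_left hS'.1) inter_subset_right)

theorem IsMaxWeight.mem_iff_mem [Fintype α] {w w' : α → ℝ} {S S' : Finset α}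
    (hS : M.IsMaxWeight w S) (hS' : M.IsMaxWeight w' S') (horder : ∀ b c, w b ≤ w c ↔ w' b ≤ w' c)
    {a : α} (ha : 0 < w a) (ha' : 0 < w' a) (huntied : ∀ b, w a = w b → b = a) :
    a ∈ S ↔ a ∈ S' := by
  let Uge := univ.filter fun b => w a ≤ w b
  let Ugt := univ.filter fun b => w a < w b
  have hupper (v : α → ℝ) (hv : ∀ b c, w b ≤ w c ↔ v b ≤ v c) (hva : 0 < v a) :
      (∀ b ∈ Uge, ∀ c, v b ≤ v c → c ∈ Uge) ∧ (∀ b ∈ Uge, 0 < v b) ∧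
        (∀ b ∈ Ugt, ∀ c, v b ≤ v c → c ∈ Ugt) ∧ (∀ b ∈ Ugt, 0 < v b) := by
    have hv' (b c : α) : w b < w c ↔ v b < v c := by rw [← not_le, hv, not_le]
    simp only [Uge, Ugt, mem_filter, mem_univ, true_and, hv, hv']
    exact ⟨fun b hb c hbc => hb.trans hbc, fun b hb => hva.trans_le hb,
      fun b hb c hbc => hb.trans_le hbc, fun b hb => hva.trans hb⟩
  obtain ⟨hUge, hposge, hUgt, hposgt⟩ := hupper w (fun _ _ => Iff.rfl) ha
  obtain ⟨hUge', hposge', hUgt', hposgt'⟩ := hupper w' horder ha'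
  have hge := hS.card_inter_eq hS' hUge hUge' hposge hposge'
  have hgt := hS.card_inter_eq hS' hUgt hUgt' hposgt hposgt'
  have hinsert : Uge = insert a Ugt := by
    ext b
    simp only [Uge, Ugt, mem_filter, mem_univ, true_and, mem_insert, le_iff_eq_or_lt]
    exact or_congr_left ⟨huntied b, fun h => h ▸ rfl⟩
  have hcard (T : Finset α) :
      (T ∩ insert a Ugt).card = (T ∩ Ugt).card + if a ∈ T then 1 else 0 := by
    split_ifs with haT
    · rw [inter_insert_of_mem haT, card_insert_of_notMem (by simp [Ugt])]
    · rw [inter_insert_of_notMem haT, add_zero]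
  rw [hinsert, hcard, hcard, hgt] at hge
  split_ifs at hge with h h' h'
  · exact iff_of_true h h'
  · omega
  · omega
  · exact iff_of_false h h'

end GreedyMatroid

section OrderPatterns

open Module Finset

variable {α : Type*}

noncomputable def orderPattern (w : α → ℝ) (p : α × α) : SignType := SignType.sign (w p.1 - w p.2)

theorem orderPattern_eq_zero_iff {w : α → ℝ} {a b : α} : orderPattern w (a, b) = 0 ↔ w a = w b := by
  rw [orderPattern, sign_eq_zero_iff, sub_eq_zero]

theorem orderPattern_ne_one_iff {w : α → ℝ} {a b : α} : orderPattern w (a, b) ≠ 1 ↔ w a ≤ w b := by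
  rw [orderPattern, Ne, sign_eq_one_iff, sub_pos, not_lt]

-- The elements whose membership in a maximum-weight independent set is not determined by the
-- order of the weights: those tied with another element, and the minima (which may weigh zero).
def ambiguous [Fintype α] [DecidableEq α] (σ : α × α → SignType) : Finset α :=
  univ.filter fun a => (∃ b ≠ a, σ (a, b) = 0) ∨ ∀ b, σ (a, b) ≠ 1

theorem card_ambiguous_orderPattern_le [Fintype α] [DecidableEq α] (w : α → ℝ) :
    (ambiguous (orderPattern w)).card ≤ {a | ∃ b ≠ a, w a = w b}.ncard + 1 := by
  let minima := {a | (∀ b, w a ≤ w b) ∧ ∀ b ≠ a, w a ≠ w b}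
  have hsub : ↑(ambiguous (orderPattern w)) ⊆ {a | ∃ b ≠ a, w a = w b} ∪ minima := by
    intro a
    simp only [ambiguous, minima, coe_filter, mem_univ, true_and,
      Set.mem_union, orderPattern_eq_zero_iff, orderPattern_ne_one_iff]
    intro ha
    by_cases htied : ∃ b ≠ a, w a = w b
    · exact Or.inl htied
    · exact Or.inr ⟨ha.resolve_left htied, fun b hb hab => htied ⟨b, hb, hab⟩⟩
  have hminima : minima.ncard ≤ 1 := (Set.ncard_le_one (Set.toFinite _)).2 fun a ha b hb => by
    by_contra hab
    exact hb.2 a hab (le_antisymm (hb.1 a) (ha.1 b))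
  rw [← Set.ncard_coe_finset]
  exact (Set.ncard_le_ncard hsub).trans ((Set.ncard_union_le _ _).trans (by omega))

namespace GreedyMatroid

variable [DecidableEq α] {M : GreedyMatroid α}

theorem IsMaxWeight.eq_of_inter_ambiguous_eq [Fintype α] {w w' : α → ℝ} {S S' : Finset α}
    (hS : M.IsMaxWeight w S) (hS' : M.IsMaxWeight w' S') (hw : 0 ≤ w) (hw' : 0 ≤ w')
    (hσ : orderPattern w = orderPattern w')
    (h : S ∩ ambiguous (orderPattern w) = S' ∩ ambiguous (orderPattern w)) : S = S' := by
  have horder (b c : α) : w b ≤ w c ↔ w' b ≤ w' c := by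
    rw [← orderPattern_ne_one_iff, hσ, orderPattern_ne_one_iff]
  ext a
  by_cases ha : a ∈ ambiguous (orderPattern w)
  · simpa [ha] using congrArg (a ∈ ·) h
  simp only [ambiguous, mem_filter, mem_univ, true_and, not_or, not_exists, not_and,
    not_forall, orderPattern_eq_zero_iff, orderPattern_ne_one_iff, not_le] at ha
  obtain ⟨huntied, b, hb⟩ := ha
  refine hS.mem_iff_mem hS' horder ((hw b).trans_lt hb) ((hw' b).trans_lt ?_) ?_
  · rwa [← not_le, ← horder, not_le]
  · exact fun c hc => by_contra fun hca => huntied c hca hc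

theorem ncard_setOf_isMaxWeight_le [Fintype α] (M : GreedyMatroid α) (W : Set (α → ℝ))
    (hW : ∀ w ∈ W, 0 ≤ w) {K : ℕ} (hK : ∀ w ∈ W, (ambiguous (orderPattern w)).card ≤ K) :
    {S | ∃ w ∈ W, M.IsMaxWeight w S}.ncard ≤ (orderPattern '' W).ncard * 2 ^ K := by
  classical
  let P := (orderPattern '' W).toFinset
  let fiber (σ : α × α → SignType) := {S | ∃ w ∈ W, orderPattern w = σ ∧ M.IsMaxWeight w S}
  have hcover : {S | ∃ w ∈ W, M.IsMaxWeight w S} ⊆ ⋃ σ ∈ P, fiber σ := by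
    rintro S ⟨w, hw, hS⟩
    exact Set.mem_biUnion (Set.mem_toFinset.2 ⟨w, hw, rfl⟩) ⟨w, hw, rfl, hS⟩
  have hfiber : ∀ σ ∈ P, (fiber σ).ncard ≤ 2 ^ K := by
    intro σ hσ
    obtain ⟨w, hw, rfl⟩ := Set.mem_toFinset.1 hσ
    calc (fiber _).ncard ≤ ((ambiguous (orderPattern w)).powerset : Set (Finset α)).ncard := by
          refine Set.ncard_le_ncard_of_injOn (· ∩ ambiguous (orderPattern w))
            (fun S _ => mem_powerset.2 inter_subset_right) ?_
          rintro S₁ ⟨w₁, hw₁, hσ₁, hS₁⟩ S₂ ⟨w₂, hw₂, hσ₂, hS₂⟩ h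
          rw [← hσ₁] at h
          exact hS₁.eq_of_inter_ambiguous_eq hS₂ (hW w₁ hw₁) (hW w₂ hw₂) (hσ₁.trans hσ₂.symm) h
      _ = 2 ^ (ambiguous (orderPattern w)).card := by rw [Set.ncard_coe_finset, card_powerset]
      _ ≤ 2 ^ K := Nat.pow_le_pow_right two_pos (hK w hw)
  calc _ ≤ (⋃ σ ∈ P, fiber σ).ncard := Set.ncard_le_ncard hcover
    _ ≤ ∑ σ ∈ P, (fiber σ).ncard := P.set_ncard_biUnion_le _
    _ ≤ P.card * 2 ^ K := by simpa using sum_le_card_nsmul P _ _ hfiber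
    _ = _ := by rw [Set.ncard_eq_toFinset_card']

end GreedyMatroid

theorem ncard_image_orderPattern_le {V : Type*} [AddCommGroup V] [Module ℝ V]
    [FiniteDimensional ℝ V] [Fintype α] (L : V →ₗ[ℝ] α → ℝ) {C : Set V} (hC : Convex ℝ C)
    {k : ℕ} (hk : finrank ℝ (vectorSpan ℝ C) ≤ k) :
    ((fun x => orderPattern (L x)) '' C).ncard ≤ (2 * Fintype.card α ^ 2 + 2) ^ k := by
  let f (p : α × α) : V →ᵃ[ℝ] ℝ := ((LinearMap.proj (R := ℝ) (φ := fun _ : α => ℝ) p.1 -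
    LinearMap.proj p.2) ∘ₗ L).toAffineMap
  have hf : (fun x => orderPattern (L x)) '' C = signPatterns f C := rfl
  rw [hf, sq, ← Fintype.card_prod]
  exact ncard_signPatterns_le_of_fintype f hC hk

end OrderPatterns

section PosteriorWeights

open Module Finset Matrix

theorem LinearIndependent.card_lt_finrank_of_map_eq_zero {K V ι : Type*} [Field K]
    [AddCommGroup V] [Module K V] [FiniteDimensional K V] [Fintype ι] {v : ι → V}
    (hv : LinearIndependent K v) {ℓ : V →ₗ[K] K} (hℓ : ℓ ≠ 0) (h : ∀ i, ℓ (v i) = 0) :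
    Fintype.card ι < finrank K V := by
  have hker : LinearIndependent K fun i => (⟨v i, h i⟩ : LinearMap.ker ℓ) :=
    LinearIndependent.of_comp (LinearMap.ker ℓ).subtype hv
  exact hker.fintype_card_le_finrank.trans_lt
    (Submodule.finrank_lt fun htop => hℓ (LinearMap.ker_eq_top.1 htop))

theorem Monotone.exists_adjacent_eq {β : Type*} [PartialOrder β] {n : ℕ} (hn : 1 ≤ n)
    {g : Fin n → β} (hg : Monotone g) {p q : Fin n} (hpq : p ≠ q) (h : g p = g q) :
    ∃ i : Fin (n - 1), g (Fin.castLE (Nat.sub_le n 1) i) = g (i.succ.castLE (by omega)) ∧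
      (Fin.castLE (Nat.sub_le n 1) i = p ∨ i.succ.castLE (by omega) = p) := by
  rcases hpq.lt_or_gt with hlt | hlt
  · refine ⟨⟨p, by omega⟩, le_antisymm (hg ?_) ?_, Or.inl rfl⟩
    · exact Fin.le_def.2 (by simp)
    · calc g (Fin.castLE _ (Fin.succ ⟨p, _⟩)) ≤ g q := hg (Fin.le_def.2 (by simp; omega))
        _ = g p := h.symm
  · refine ⟨⟨p - 1, by omega⟩, le_antisymm (hg ?_) ?_, Or.inr (Fin.ext (by simp; omega))⟩
    · exact Fin.le_def.2 (by simp)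
    · calc g (Fin.castLE _ (Fin.succ ⟨p - 1, _⟩)) = g p := congrArg g (Fin.ext (by simp; omega))
        _ = g q := h
        _ ≤ _ := hg (Fin.le_def.2 (by simp; omega))

theorem ncard_setOf_exists_ne_eq_le {V : Type*} [AddCommGroup V] [Module ℝ V]
    [FiniteDimensional ℝ V] {n d : ℕ} (hn : 1 ≤ n) (hd : finrank ℝ V ≤ d) (ψ : Fin n → V)
    (hψ : ∀ (π : Equiv.Perm (Fin n)) (S : Finset (Fin (n - 1))), S.card = d →
      LinearIndependent ℝ (fun i : S => ψ (π (Fin.castLE (Nat.sub_le n 1) i.1)) -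
        ψ (π ((i.1 : Fin (n - 1)).succ.castLE (by omega)))))
    {ℓ : V →ₗ[ℝ] ℝ} (hℓ : ℓ ≠ 0) :
    {a | ∃ b ≠ a, ℓ (ψ a) = ℓ (ψ b)}.ncard ≤ 2 * (d - 1) := by
  let w (a : Fin n) := ℓ (ψ a)
  let π := Tuple.sort w
  let lo (i : Fin (n - 1)) : Fin n := Fin.castLE (Nat.sub_le n 1) i
  let hi (i : Fin (n - 1)) : Fin n := i.succ.castLE (by omega)
  let E := univ.filter fun i => w (π (lo i)) = w (π (hi i))
  have hE : E.card ≤ d - 1 := by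
    by_contra! hlt
    obtain ⟨S, hSE, hS⟩ := exists_subset_card_eq (show d ≤ E.card by omega)
    have := (hψ π S hS).card_lt_finrank_of_map_eq_zero hℓ fun i => by
      rw [map_sub, sub_eq_zero]
      exact (mem_filter.1 (hSE i.2)).2
    rw [Fintype.card_coe, hS] at this
    omega
  have htied : {a | ∃ b ≠ a, w a = w b} ⊆ ↑(E.image (π ∘ lo) ∪ E.image (π ∘ hi)) := by
    rintro a ⟨b, hba, hab⟩
    obtain ⟨i, hiE, hpos⟩ := (Tuple.monotone_sort w).exists_adjacent_eq hn
      (p := π.symm a) (q := π.symm b) (by simpa using hba.symm)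
      (by simp only [Function.comp_apply, π, Equiv.apply_symm_apply, hab])
    replace hiE : i ∈ E := mem_filter.2 ⟨mem_univ _, hiE⟩
    rcases hpos with h | h
    · exact mem_union_left _
        (mem_image.2 ⟨i, hiE, by simp only [Function.comp_apply, lo, h, Equiv.apply_symm_apply]⟩)
    · exact mem_union_right _
        (mem_image.2 ⟨i, hiE, by simp only [Function.comp_apply, hi, h, Equiv.apply_symm_apply]⟩)
  calc _ ≤ _ := Set.ncard_le_ncard htied (finite_toSet _)
    _ = _ := Set.ncard_coe_finset _
    _ ≤ E.card + E.card := (card_union_le _ _).trans (add_le_add card_image_le card_image_le)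
    _ ≤ 2 * (d - 1) := by omega

theorem finrank_vectorSpan_stdSimplex_lt {ι : Type*} [Fintype ι] [Nonempty ι] :
    finrank ℝ (vectorSpan ℝ (stdSimplex ℝ ι)) < Fintype.card ι := by
  let ℓ := dotProductBilin ℝ ℝ (1 : ι → ℝ)
  have hle : vectorSpan ℝ (stdSimplex ℝ ι) ≤ LinearMap.ker ℓ := by
    rw [vectorSpan_def, Submodule.span_le]
    rintro _ ⟨p, hp, q, hq, rfl⟩
    simp [ℓ, one_dotProduct, hp.2, hq.2]
  have hℓ : LinearMap.ker ℓ ≠ ⊤ := fun h => by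
    have := h ▸ Submodule.mem_top (x := (1 : ι → ℝ))
    simp [ℓ] at this
  calc _ ≤ finrank ℝ (LinearMap.ker ℓ) := Submodule.finrank_mono hle
    _ < finrank ℝ (ι → ℝ) := Submodule.finrank_lt hℓ
    _ = _ := Module.finrank_fintype_fun_eq_card ℝ

theorem ncard_orderPatterns_vecMul_le {d n : ℕ} (hd : 1 ≤ d) (r : Matrix (Fin d) (Fin n) ℝ) :
    (orderPattern '' ((fun ξ => ξ ᵥ* r) '' stdSimplex ℝ (Fin d))).ncard ≤
      (2 * n ^ 2 + 2) ^ (d - 1) := by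
  have : Nonempty (Fin d) := ⟨⟨0, hd⟩⟩
  have hdim := finrank_vectorSpan_stdSimplex_lt (ι := Fin d)
  rw [Fintype.card_fin] at hdim
  have h := ncard_image_orderPattern_le r.vecMulLinear (convex_stdSimplex ℝ (Fin d))
    (k := d - 1) (by omega)
  rwa [Fintype.card_fin, ← Set.image_image] at h

end PosteriorWeights

/-- Theorem (general-enumeration): for a fixed number `d` of states of nature, under the
non-degeneracy assumption, the number of independent sets that are a maximum-weight
independent set for the posterior-induced weights of some posterior `ξ ∈ Δ_Θ` is
`O(n^{2(d-1)})`. -/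
theorem stmt_9 (d : ℕ) (hd : 1 ≤ d) :
    ∃ C : ℕ, ∀ (n : ℕ) (hn : 2 ≤ n) (M : GreedyMatroid (Fin n))
      (r : Fin d → Fin n → ℝ) (hr : ∀ θ i, 0 ≤ r θ i)
      (hnondeg : ∀ (π : Equiv.Perm (Fin n)) (S : Finset (Fin (n - 1))), S.card = d →
        LinearIndependent ℝ (fun i : S =>
          (fun θ => r θ (π (Fin.castLE (Nat.sub_le n 1) i.1))) -
            (fun θ => r θ (π ((i.1 : Fin (n - 1)).succ.castLE (by omega)))))),
      Nat.card {S : Finset (Fin n) | M.Indep S ∧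
          ∃ ξ : Fin d → ℝ, (∀ θ, 0 ≤ ξ θ) ∧ ∑ θ, ξ θ = 1 ∧
            ∀ T : Finset (Fin n), M.Indep T →
              ∑ i ∈ T, ∑ θ, ξ θ * r θ i ≤ ∑ i ∈ S, ∑ θ, ξ θ * r θ i} ≤
        C * n ^ (2 * (d - 1)) := by
  refine ⟨2 ^ (4 * d), fun n hn M r hr hnondeg => ?_⟩
  let W := (fun ξ => Matrix.vecMul ξ r) '' stdSimplex ℝ (Fin d)
  have hW : ∀ w ∈ W, 0 ≤ w := by
    rintro _ ⟨ξ, hξ, rfl⟩ i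
    exact Finset.sum_nonneg (s := Finset.univ) fun θ _ => mul_nonneg (hξ.1 θ) (hr θ i)
  have hK : ∀ w ∈ W, (ambiguous (orderPattern w)).card ≤ 2 * (d - 1) + 1 := by
    rintro _ ⟨ξ, hξ, rfl⟩
    have hξ0 : dotProductBilin ℝ ℝ ξ ≠ 0 := fun h => by
      simpa [dotProduct, hξ.2] using LinearMap.congr_fun h 1
    have htied : {a | ∃ b ≠ a, Matrix.vecMul ξ r a = Matrix.vecMul ξ r b}.ncard ≤ 2 * (d - 1) :=
      ncard_setOf_exists_ne_eq_le (by omega) (Module.finrank_fin_fun ℝ).le (fun i θ => r θ i)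
        hnondeg hξ0
    exact (card_ambiguous_orderPattern_le _).trans (Nat.add_le_add_right htied 1)
  rw [Nat.card_coe_set_eq]
  calc _ ≤ {S | ∃ w ∈ W, M.IsMaxWeight w S}.ncard := by
        refine Set.ncard_le_ncard ?_ (Set.toFinite _)
        rintro S ⟨hS, ξ, h0, h1, hmax⟩
        exact ⟨_, ⟨ξ, ⟨h0, h1⟩, rfl⟩, hS, hmax⟩
    _ ≤ (orderPattern '' W).ncard * 2 ^ (2 * (d - 1) + 1) := M.ncard_setOf_isMaxWeight_le W hW hK
    _ ≤ (2 ^ 2 * n ^ 2) ^ (d - 1) * 2 ^ (2 * (d - 1) + 1) := by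
        gcongr
        exact (ncard_orderPatterns_vecMul_le hd r).trans (Nat.pow_le_pow_left (by nlinarith) _)
    _ = 2 ^ (4 * (d - 1) + 1) * n ^ (2 * (d - 1)) := by rw [mul_pow, ← pow_mul, ← pow_mul]; ring
    _ ≤ 2 ^ (4 * d) * n ^ (2 * (d - 1)) := by gcongr <;> omega
end

section
/- Suppose for each θ ∈ Θ and each y ≥ 0 we have an α-approximation guarantee: a set S(θ,y) ∈ 𝓘 with s_θ(S(θ,y)) + y·r_θ(S(θ,y)) ≥ α·s_θ(S') + y·r_θ(S') for all S' ∈ 𝓘, where α ∈ (0,1]. If (x_θ)_{θ∈Θ} ∈ ℝ^Θ and y ≥ 0 satisfy x_θ ≥ μ(θ)(s_θ(S(θ,y)) + y·r_θ(S(θ,y))) for all θ, then (x_θ/α)_{θ∈Θ} and y/α are feasible for the dual LP: x_θ/α − μ(θ) r_θ(S)·(y/α) ≥ μ(θ) s_θ(S) for all θ ∈ Θ and S ∈ 𝓘, and y/α ≥ 0. -/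
/-- Lemma (approximate separation): an `α`-approximate maximization oracle for
`s_θ + y·r_θ` yields an `α`-approximate separation oracle for the dual of the
CCE-persuasiveness LP: if no separating hyperplane is found, then the scaled point
`(x/α, y/α)` is dual feasible. -/
theorem stmt_11 {Θ I : Type*} [Fintype Θ] [Fintype I]
    (μ : Θ → ℝ) (hμnonneg : ∀ θ, 0 ≤ μ θ) (hμsum : ∑ θ, μ θ = 1)
    (s r : Θ → I → ℝ) (hs : ∀ θ S, 0 ≤ s θ S) (hr : ∀ θ S, 0 ≤ r θ S)
    (α : ℝ) (hα : α ∈ Set.Ioc (0 : ℝ) 1)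
    (y : ℝ) (hy : 0 ≤ y)
    (Sor : Θ → I)
    (hSor : ∀ θ, ∀ S' : I,
      α * s θ S' + y * r θ S' ≤ s θ (Sor θ) + y * r θ (Sor θ))
    (x : Θ → ℝ)
    (hx : ∀ θ, μ θ * (s θ (Sor θ) + y * r θ (Sor θ)) ≤ x θ) :
    (∀ (θ : Θ) (S : I), μ θ * s θ S ≤ x θ / α - μ θ * r θ S * (y / α)) ∧
      0 ≤ y / α := by
  obtain ⟨hα0, hα1⟩ := hα
  refine ⟨fun θ S => ?_, div_nonneg hy hα0.le⟩
  have h1 : μ θ * (α * s θ S + y * r θ S) ≤ x θ :=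
    le_trans (mul_le_mul_of_nonneg_left (hSor θ S) (hμnonneg θ)) (hx θ)
  rw [le_sub_iff_add_le, div_eq_mul_inv, div_eq_mul_inv]
  have key : μ θ * s θ S * α + μ θ * r θ S * y ≤ x θ := by nlinarith
  calc μ θ * s θ S + μ θ * r θ S * (y * α⁻¹)
      = (μ θ * s θ S * α + μ θ * r θ S * y) * α⁻¹ := by
        field_simp
    _ ≤ x θ * α⁻¹ := by
        gcongr
end

section
/- At any vertex (φ_θ)_{θ∈Θ} of the polytope P (defined as in the previous statement), there is at most one state θ' ∈ Θ for which φ_{θ'} is not a 0–1 vector, and for that θ' at most two coordinates φ_{θ'}(S₁), φ_{θ'}(S₂) lie strictly in (0,1), with φ_{θ'}(S₁) + φ_{θ'}(S₂) = 1. -/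
/-!
Call `d` a feasible direction at `φ` if it keeps every row sum and moves only positive entries of
`φ`. If it also leaves the payoff unchanged, `φ ± ε d` stays in the polytope for small `ε > 0`, so
at a vertex it vanishes. Hence any two feasible directions at a vertex are proportional (combine
them so that the payoff cancels). Transfers of mass `e_{θ,S₁} - e_{θ,S₂}` between two positive
entries of one row are feasible, and two of them with different supports are never proportional.
So no two rows have two positive entries each and no row has three positive entries; since a row
with an entry in `(0,1)` has a second positive entry, the claim follows.
-/

open Finset

lemma eq_zero_of_add_mem_of_sub_mem_of_mem_extremePoints {𝕜 E : Type*} [Field 𝕜] [LinearOrder 𝕜]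
    [IsStrictOrderedRing 𝕜] [AddCommGroup E] [Module 𝕜 E] {A : Set E} {x v : E}
    (hx : x ∈ A.extremePoints 𝕜) (hadd : x + v ∈ A) (hsub : x - v ∈ A) : v = 0 := by
  have hseg : x ∈ openSegment 𝕜 (x - v) (x + v) :=
    ⟨1 / 2, 1 / 2, by norm_num, by norm_num, by norm_num, by
      rw [← smul_add, sub_add_add_cancel, ← two_smul 𝕜 x, smul_smul]; norm_num⟩
  simpa using ((mem_extremePoints.mp hx).2 _ hsub _ hadd hseg).2

open Filter Topology in
lemma exists_pos_forall_mul_abs_le {ι : Type*} [Finite ι] {f g : ι → ℝ} (hg : ∀ i, 0 ≤ g i)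
    (hfg : ∀ i, f i ≠ 0 → 0 < g i) : ∃ ε > 0, ∀ i, ε * |f i| ≤ g i := by
  have : ∀ᶠ ε in 𝓝[>] (0 : ℝ), ∀ i, ε * |f i| ≤ g i := by
    refine eventually_all.2 fun i => ?_
    by_cases hfi : f i = 0
    · simp [hfi, hg i]
    have hlim : Tendsto (fun ε : ℝ => ε * |f i|) (𝓝[>] 0) (𝓝 0) :=
      ((continuous_mul_const _).tendsto' 0 0 (zero_mul _)).mono_left nhdsWithin_le_nhds
    exact hlim.eventually (ge_mem_nhds (hfg i hfi))
  obtain ⟨ε, hε, hεpos⟩ := (this.and self_mem_nhdsWithin).exists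
  exact ⟨ε, hεpos, hε⟩

section StdSimplex

variable {I : Type*} [Fintype I] {x : I → ℝ}

lemma eq_zero_or_eq_one_of_mem_stdSimplex (hx : x ∈ stdSimplex ℝ I) {S : I}
    (hS : x S ∉ Set.Ioo 0 1) : x S = 0 ∨ x S = 1 := by
  obtain ⟨h0, h1⟩ := mem_Icc_of_mem_stdSimplex hx S
  by_contra! h
  exact hS ⟨h0.lt_of_ne' h.1, h1.lt_of_ne h.2⟩

lemma exists_ne_pos_of_mem_stdSimplex (hx : x ∈ stdSimplex ℝ I) {S : I} (hS : x S < 1) :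
    ∃ S' ≠ S, 0 < x S' := by
  classical
  by_contra! h
  have : ∑ S' ∈ univ.erase S, x S' ≤ 0 := sum_nonpos fun S' hS' => h S' (ne_of_mem_erase hS')
  linarith [add_sum_erase univ x (mem_univ S), hx.2]

end StdSimplex

section Polytope

variable {Θ I : Type*} [Fintype I]

def IsFeasibleDirection (φ d : Θ → I → ℝ) : Prop :=
  (∀ θ, ∑ S, d θ S = 0) ∧ ∀ θ S, d θ S ≠ 0 → 0 < φ θ S

section Directions

variable {φ d₁ d₂ : Θ → I → ℝ}

lemma IsFeasibleDirection.smul_sub_smul (h₁ : IsFeasibleDirection φ d₁)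
    (h₂ : IsFeasibleDirection φ d₂) (a b : ℝ) : IsFeasibleDirection φ (a • d₁ - b • d₂) := by
  refine ⟨fun θ => ?_, fun θ S h => ?_⟩
  · simp [sum_sub_distrib, ← mul_sum, h₁.1 θ, h₂.1 θ]
  · by_cases hd : d₁ θ S = 0
    · exact h₂.2 θ S fun hd₂ => h (by simp [hd, hd₂])
    · exact h₁.2 θ S hd

lemma isFeasibleDirection_single_sub_single [DecidableEq Θ] [DecidableEq I] {φ : Θ → I → ℝ}
    {θ : Θ} {S₁ S₂ : I} (h₁ : 0 < φ θ S₁) (h₂ : 0 < φ θ S₂) :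
    IsFeasibleDirection φ (Pi.single θ (Pi.single S₁ 1 - Pi.single S₂ 1)) := by
  refine ⟨fun θ' => ?_, fun θ' S h => ?_⟩
  · rcases eq_or_ne θ' θ with rfl | hθ
    · simp [sum_sub_distrib]
    · simp [hθ]
  · rcases eq_or_ne θ' θ with rfl | hθ
    · rcases eq_or_ne S S₁ with rfl | hS₁
      · exact h₁
      rcases eq_or_ne S S₂ with rfl | hS₂
      · exact h₂
      simp [hS₁, hS₂] at h
    · simp [hθ] at h

end Directions

variable [Fintype Θ]

def payoff (μ : Θ → ℝ) (r : Θ → I → ℝ) : (Θ → I → ℝ) →ₗ[ℝ] ℝ where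
  toFun φ := ∑ θ, ∑ S, μ θ * φ θ S * r θ S
  map_add' φ ψ := by simp only [Pi.add_apply, mul_add, add_mul, sum_add_distrib]
  map_smul' c φ := by
    simp only [Pi.smul_apply, smul_eq_mul, RingHom.id_apply, mul_sum]
    exact sum_congr rfl fun _ _ => sum_congr rfl fun _ _ => by ring

def persuasiveSet (μ : Θ → ℝ) (r : Θ → I → ℝ) (C : ℝ) : Set (Θ → I → ℝ) :=
  {φ | (∀ θ S, 0 ≤ φ θ S) ∧ (∀ θ, ∑ S, φ θ S = 1) ∧ C ≤ payoff μ r φ}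

namespace IsFeasibleDirection

variable {μ : Θ → ℝ} {r : Θ → I → ℝ} {C : ℝ} {φ d d₁ d₂ : Θ → I → ℝ}

lemma add_smul_mem_persuasiveSet (hd : IsFeasibleDirection φ d) (hφ : φ ∈ persuasiveSet μ r C)
    (hpay : payoff μ r d = 0) {c : ℝ} (hc : ∀ θ S, |c| * |d θ S| ≤ φ θ S) :
    φ + c • d ∈ persuasiveSet μ r C := by
  refine ⟨fun θ S => ?_, fun θ => ?_, ?_⟩
  · have h := neg_abs_le (c * d θ S)
    rw [abs_mul] at h
    simp only [Pi.add_apply, Pi.smul_apply, smul_eq_mul]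
    linarith [hc θ S]
  · simp [sum_add_distrib, ← mul_sum, hφ.2.1 θ, hd.1 θ]
  · simpa [hpay] using hφ.2.2

lemma eq_zero_of_payoff_eq_zero (hd : IsFeasibleDirection φ d)
    (hφ : φ ∈ (persuasiveSet μ r C).extremePoints ℝ) (hpay : payoff μ r d = 0) : d = 0 := by
  obtain ⟨ε, hε, hεd⟩ := exists_pos_forall_mul_abs_le (f := fun p : Θ × I => d p.1 p.2)
    (fun p => hφ.1.1 p.1 p.2) fun p => hd.2 p.1 p.2
  have hmem (c : ℝ) (hc : |c| = ε) : φ + c • d ∈ persuasiveSet μ r C :=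
    hd.add_smul_mem_persuasiveSet hφ.1 hpay fun θ S => hc ▸ hεd (θ, S)
  have := eq_zero_of_add_mem_of_sub_mem_of_mem_extremePoints hφ (hmem ε (abs_of_pos hε))
    (by simpa [sub_eq_add_neg] using hmem (-ε) (by simp [abs_of_pos hε]))
  exact (smul_eq_zero.mp this).resolve_left hε.ne'

lemma eq_zero_of_apply_ne_zero_of_apply_eq_zero (hφ : φ ∈ (persuasiveSet μ r C).extremePoints ℝ)
    (h₁ : IsFeasibleDirection φ d₁) (h₂ : IsFeasibleDirection φ d₂) {θ : Θ} {S : I}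
    (hd₁ : d₁ θ S ≠ 0) (hd₂ : d₂ θ S = 0) : d₂ = 0 := by
  have hcomb : payoff μ r d₂ • d₁ - payoff μ r d₁ • d₂ = 0 :=
    (h₁.smul_sub_smul h₂ _ _).eq_zero_of_payoff_eq_zero hφ (by simp [mul_comm])
  have : payoff μ r d₂ * d₁ θ S = 0 := by
    simpa [hd₂] using congrFun (congrFun hcomb θ) S
  exact h₂.eq_zero_of_payoff_eq_zero hφ ((mul_eq_zero.mp this).resolve_right hd₁)

end IsFeasibleDirection

section Vertex

variable {μ : Θ → ℝ} {r : Θ → I → ℝ} {C : ℝ} {φ : Θ → I → ℝ}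

lemma eq_of_two_pos_of_two_pos_of_mem_extremePoints
    (hφ : φ ∈ (persuasiveSet μ r C).extremePoints ℝ) {θ θ' : Θ} {S₁ S₂ T₁ T₂ : I}
    (hS : S₁ ≠ S₂) (hT : T₁ ≠ T₂) (h₁ : 0 < φ θ S₁) (h₂ : 0 < φ θ S₂) (h₃ : 0 < φ θ' T₁)
    (h₄ : 0 < φ θ' T₂) : θ = θ' := by
  classical
  by_contra hθ
  have := (isFeasibleDirection_single_sub_single h₁ h₂).eq_zero_of_apply_ne_zero_of_apply_eq_zero
    hφ (isFeasibleDirection_single_sub_single h₃ h₄) (θ := θ) (S := S₁) (by simp [hS])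
    (by simp [hθ])
  simpa [hT] using congrFun (congrFun this θ') T₁

lemma eq_zero_of_two_pos_of_mem_extremePoints
    (hφ : φ ∈ (persuasiveSet μ r C).extremePoints ℝ) {θ : Θ} {S₁ S₂ S : I}
    (hS₁₂ : S₁ ≠ S₂) (h₁ : 0 < φ θ S₁) (h₂ : 0 < φ θ S₂) (hS₁ : S ≠ S₁) (hS₂ : S ≠ S₂) :
    φ θ S = 0 := by
  classical
  by_contra hS
  have hpos : 0 < φ θ S := (hφ.1.1 θ S).lt_of_ne' hS
  have := (isFeasibleDirection_single_sub_single h₁ hpos).eq_zero_of_apply_ne_zero_of_apply_eq_zero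
    hφ (isFeasibleDirection_single_sub_single h₂ hpos) (θ := θ) (S := S₁) (by simp [hS₁.symm])
    (by simp [hS₁₂, hS₁.symm])
  simpa [hS₂.symm] using congrFun (congrFun this θ) S₂

end Vertex

end Polytope

open Finset in
theorem stmt_13_general {Θ I : Type*} [Fintype Θ] [Fintype I]
    (μ : Θ → ℝ) (hμsum : ∑ θ, μ θ = 1)
    (r : Θ → I → ℝ) (C : ℝ)
    (P : Set (Θ → I → ℝ))
    (hP : P = {φ | (∀ θ S, 0 ≤ φ θ S) ∧ (∀ θ, ∑ S, φ θ S = 1) ∧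
      C ≤ ∑ θ, ∑ S, μ θ * φ θ S * r θ S})
    (φ : Θ → I → ℝ) (hvertex : φ ∈ Set.extremePoints ℝ P) :
    ∃ θ' : Θ,
      (∀ θ, θ ≠ θ' → ∀ S, φ θ S = 0 ∨ φ θ S = 1) ∧
      (Finset.univ.filter (fun S : I => φ θ' S ∈ Set.Ioo (0 : ℝ) 1)).card ≤ 2 ∧
      (∀ S₁ S₂ : I, S₁ ≠ S₂ → φ θ' S₁ ∈ Set.Ioo (0 : ℝ) 1 →
        φ θ' S₂ ∈ Set.Ioo (0 : ℝ) 1 → φ θ' S₁ + φ θ' S₂ = 1) := by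
  subst hP
  replace hvertex : φ ∈ (persuasiveSet μ r C).extremePoints ℝ := hvertex
  have hrow (θ : Θ) : φ θ ∈ stdSimplex ℝ I := ⟨hvertex.1.1 θ, hvertex.1.2.1 θ⟩
  have hpair (θ : Θ) (S : I) (h : φ θ S ∈ Set.Ioo 0 1) : ∃ S' ≠ S, 0 < φ θ S' :=
    exists_ne_pos_of_mem_stdSimplex (hrow θ) h.2
  obtain ⟨θ', hθ'⟩ : ∃ θ', ∀ θ ≠ θ', ∀ S, φ θ S ∉ Set.Ioo 0 1 := by
    by_cases hfrac : ∃ θ S, φ θ S ∈ Set.Ioo 0 1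
    · obtain ⟨θ', S', h'⟩ := hfrac
      obtain ⟨T', hT', hT'pos⟩ := hpair θ' S' h'
      refine ⟨θ', fun θ hθ S h => hθ ?_⟩
      obtain ⟨T, hT, hTpos⟩ := hpair θ S h
      exact eq_of_two_pos_of_two_pos_of_mem_extremePoints hvertex hT.symm hT'.symm h.1 hTpos h'.1
        hT'pos
    · simp only [not_exists] at hfrac
      obtain ⟨θ₀⟩ : Nonempty Θ :=
        univ_nonempty_iff.mp (nonempty_of_sum_ne_zero (hμsum ▸ one_ne_zero))
      exact ⟨θ₀, fun θ _ => hfrac θ⟩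
  refine ⟨θ', fun θ hθ S => eq_zero_or_eq_one_of_mem_stdSimplex (hrow θ) (hθ' θ hθ S), ?_,
    fun S₁ S₂ hS h₁ h₂ => ?_⟩
  · by_contra! hcard
    obtain ⟨a, ha, b, hb, c, hc, hab, hac, hbc⟩ := two_lt_card.mp hcard
    simp only [mem_filter, mem_univ, true_and] at ha hb hc
    exact hc.1.ne' (eq_zero_of_two_pos_of_mem_extremePoints hvertex hab ha.1 hb.1 hac.symm hbc.symm)
  · rw [← (hrow θ').2, Fintype.sum_eq_add S₁ S₂ hS]
    exact fun S hS' => eq_zero_of_two_pos_of_mem_extremePoints hvertex hS h₁.1 h₂.1 hS'.1 hS'.2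

open Finset in
/-- Structure lemma for vertices of the CCE-persuasiveness polytope: at any vertex,
at most one state has a non-0/1 distribution, and for that state at most two
coordinates lie strictly in (0,1), summing to 1. -/
theorem stmt_13 {Θ I : Type*} [Fintype Θ] [Fintype I] [DecidableEq Θ]
    (μ : Θ → ℝ) (hμpos : ∀ θ, 0 < μ θ) (hμsum : ∑ θ, μ θ = 1)
    (r : Θ → I → ℝ) (hr : ∀ θ S, 0 ≤ r θ S) (C : ℝ)
    (hC : ∀ T : I, ∑ θ, μ θ * r θ T ≤ C)
    (P : Set (Θ → I → ℝ))
    (hP : P = {φ | (∀ θ S, 0 ≤ φ θ S) ∧ (∀ θ, ∑ S, φ θ S = 1) ∧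
      C ≤ ∑ θ, ∑ S, μ θ * φ θ S * r θ S})
    (φ : Θ → I → ℝ) (hvertex : φ ∈ Set.extremePoints ℝ P) :
    ∃ θ' : Θ,
      (∀ θ, θ ≠ θ' → ∀ S, φ θ S = 0 ∨ φ θ S = 1) ∧
      (Finset.univ.filter (fun S : I => φ θ' S ∈ Set.Ioo (0 : ℝ) 1)).card ≤ 2 ∧
      (∀ S₁ S₂ : I, S₁ ≠ S₂ → φ θ' S₁ ∈ Set.Ioo (0 : ℝ) 1 →
        φ θ' S₂ ∈ Set.Ioo (0 : ℝ) 1 → φ θ' S₁ + φ θ' S₂ = 1) :=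
  stmt_13_general μ hμsum r C P hP φ hvertex
end
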